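/- arXiv:2102.00857 — 6 statements merged into one kernel-verified Lean document; each statement's English description precedes it below -/
import Mathlib

section
/- Let X be a Banach space and (f_n) a weak* null sequence in X*. Then β((f_n)) ≤ α((f_n)) ≤ 2β((f_n)), where α((f_n)) = sup over weakly compact K ⊆ B_X of limsup_n sup_{x∈K} |⟨f_n, x⟩| and β((f_n)) = sup over weakly null sequences (x_n) in B_X of limsup_n |⟨f_n, x_n⟩|. -/
open Filter Topology Metric Set NormedSpace

noncomputable section

/-- `y` is a convex block subsequence of `x`. -/
def IsConvexBlock {E : Type*} [AddCommGroup E] [Module ℝ E] (x y : ℕ → E) : Prop :=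
  ∃ k : ℕ → ℕ, k 0 = 0 ∧ StrictMono k ∧
    ∀ n, y n ∈ convexHull ℝ (x '' Set.Ico (k n) (k (n + 1)))

variable (X : Type*) [NormedAddCommGroup X] [NormedSpace ℝ X]

/-- A set is weakly compact if its image in the weak topology is compact. -/
def WeaklyCompact (K : Set X) : Prop := IsCompact (toWeakSpace ℝ X '' K)

/-- A sequence is weakly null. -/
def WeaklyNull (x : ℕ → X) : Prop :=
  ∀ f : X →L[ℝ] ℝ, Tendsto (fun n => f (x n)) atTop (𝓝 0)

/-- A sequence in the dual is weak* null. -/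
def WeakStarNull (f : ℕ → X →L[ℝ] ℝ) : Prop :=
  ∀ x : X, Tendsto (fun n => f n x) atTop (𝓝 0)

/-- A sequence in the dual is weak* Cauchy. -/
def WeakStarCauchy (f : ℕ → X →L[ℝ] ℝ) : Prop :=
  ∀ x : X, ∃ L : ℝ, Tendsto (fun n => f n x) atTop (𝓝 L)

variable {X}

/-- α((f_n)) = sup over weakly compact K ⊆ B_X of limsup_n sup_{x ∈ K} |⟨f_n, x⟩|. -/
def alphaQ (f : ℕ → X →L[ℝ] ℝ) : ℝ :=
  sSup { r | ∃ K : Set X, K ⊆ closedBall 0 1 ∧ WeaklyCompact X K ∧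
    r = limsup (fun n => sSup ((fun x => |f n x|) '' K)) atTop }

/-- β((f_n)) = sup over weakly null (x_n) in B_X of limsup_n |⟨f_n, x_n⟩|. -/
def betaQ (f : ℕ → X →L[ℝ] ℝ) : ℝ :=
  sSup { r | ∃ x : ℕ → X, (∀ n, x n ∈ closedBall (0 : X) 1) ∧ WeaklyNull X x ∧
    r = limsup (fun n => |f n (x n)|) atTop }

/-- ca_{ρ*}((f_n)): measures Mackey-Cauchyness. -/
def caRho (f : ℕ → X →L[ℝ] ℝ) : ℝ :=
  sSup { r | ∃ K : Set X, K ⊆ closedBall 0 1 ∧ WeaklyCompact X K ∧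
    r = ⨅ n : ℕ, sSup { t | ∃ k ≥ n, ∃ l ≥ n, ∃ x ∈ K, t = |(f k - f l) x| } }

/-- ca((z_n)) = inf_n sup_{k,l ≥ n} ‖z_k - z_l‖. -/
def caSeq {E : Type*} [NormedAddCommGroup E] (z : ℕ → E) : ℝ :=
  ⨅ n : ℕ, sSup { r | ∃ k ≥ n, ∃ l ≥ n, r = ‖z k - z l‖ }

variable (X)

def K1 : ℝ :=
  sSup { r | ∃ f : ℕ → X →L[ℝ] ℝ, (∀ n, ‖f n‖ ≤ 1) ∧ WeakStarNull X f ∧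
    r = sInf { s | ∃ g, IsConvexBlock f g ∧ s = alphaQ g } }

def K2 : ℝ :=
  sSup { r | ∃ f : ℕ → X →L[ℝ] ℝ, (∀ n, ‖f n‖ ≤ 1) ∧ WeakStarNull X f ∧
    r = sInf { s | ∃ g, IsConvexBlock f g ∧ s = betaQ g } }

def K3 : ℝ :=
  sSup { r | ∃ f : ℕ → X →L[ℝ] ℝ, (∀ n, ‖f n‖ ≤ 1) ∧ WeakStarCauchy X f ∧
    r = sInf { s | ∃ g, IsConvexBlock f g ∧ s = caRho g } }

/-- Property (K). -/
def PropertyK : Prop :=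
  ∀ f : ℕ → X →L[ℝ] ℝ, WeakStarNull X f → ∃ g, IsConvexBlock f g ∧ alphaQ g = 0

/-- The Grothendieck property: every weak* null sequence in the dual is weakly null. -/
def Grothendieck : Prop :=
  ∀ f : ℕ → X →L[ℝ] ℝ, WeakStarNull X f →
    ∀ Φ : (X →L[ℝ] ℝ) →L[ℝ] ℝ, Tendsto (fun n => Φ (f n)) atTop (𝓝 0)

def GQ : ℝ :=
  sSup { r | ∃ f : ℕ → X →L[ℝ] ℝ, (∀ n, ‖f n‖ ≤ 1) ∧ WeakStarNull X f ∧
    r = sInf { s | ∃ g, IsConvexBlock f g ∧ s = limsup (fun n => ‖g n‖) atTop } }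

def RQ : ℝ :=
  sSup { r | ∃ x : ℕ → X, (∀ n, x n ∈ closedBall (0 : X) 1) ∧
    r = sInf { s | ∃ z, IsConvexBlock x z ∧ s = caSeq z } }

/-- weak* cluster points in the bidual of a sequence in the bidual. -/
def WStarClusterPts (u : ℕ → (X →L[ℝ] ℝ) →L[ℝ] ℝ) : Set ((X →L[ℝ] ℝ) →L[ℝ] ℝ) :=
  { z | MapClusterPt (StrongDual.toWeakDual (𝕜 := ℝ) z) atTop
      (fun n => StrongDual.toWeakDual (𝕜 := ℝ) (u n)) }

def wckQ (A : Set X) : ℝ :=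
  sSup { r | ∃ x : ℕ → X, (∀ n, x n ∈ A) ∧
    r = sInf { s | ∃ z ∈ WStarClusterPts X (fun n => inclusionInDoubleDual ℝ X (x n)),
      ∃ v : X, s = ‖z - inclusionInDoubleDual ℝ X v‖ } }

/-!
The bound `β ≤ α` holds because a weakly null sequence of `B_X`, together with its limit `0`,
is a weakly compact subset of `B_X`.

For `α ≤ 2β`, fix a weakly compact `K ⊆ B_X` and pick indices `n_k` and points `z_k ∈ K` with
`|f_{n_k}(z_k)|` close to `limsup_n sup_K |f_n|`. Inside the closed span `Y` of the `z_k`, which is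
separable, countably many functionals separate points, so the weak topology on the weakly compact
set `K ∩ Y` is metrizable and a subsequence `z_{k_j}` converges weakly to some `v ∈ K`. Then
`(z_{k_j} - v) / 2` is weakly null in `B_X`, while `f_n v → 0` because `(f_n)` is weak* null, so
`|f_{n_{k_j}}((z_{k_j} - v) / 2)| ≥ (|f_{n_{k_j}}(z_{k_j})| - o(1)) / 2`.
-/

theorem StrictMono.tendsto_extend_zero {M : Type*} [Zero M] [TopologicalSpace M] {τ : ℕ → ℕ}
    (hτ : StrictMono τ) {u : ℕ → M} (hu : Tendsto u atTop (𝓝 0)) :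
    Tendsto (Function.extend τ u 0) atTop (𝓝 0) := by
  intro s hs
  obtain ⟨J, hJ⟩ := eventually_atTop.mp (hu hs)
  refine eventually_atTop.mpr ⟨τ J, fun n hn => ?_⟩
  by_cases h : ∃ j, τ j = n
  · obtain ⟨j, rfl⟩ := h
    rw [hτ.injective.extend_apply]
    exact hJ j (hτ.le_iff_le.mp hn)
  · rw [Function.extend_apply' _ _ _ h]
    exact mem_of_mem_nhds hs

section WeakTopology

variable {E : Type*} [NormedAddCommGroup E] [NormedSpace ℝ E]

theorem topDualPairing_flip_injective : Function.Injective (topDualPairing ℝ E).flip :=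
  fun _ _ h => SeparatingDual.eq_iff_forall_dual_eq.mpr fun g => LinearMap.congr_fun h g

theorem continuous_dual_apply_weakSpace (g : E →L[ℝ] ℝ) :
    Continuous fun w : WeakSpace ℝ E => g ((toWeakSpace ℝ E).symm w) :=
  WeakBilin.eval_continuous (topDualPairing ℝ E).flip g

theorem tendsto_toWeakSpace_iff {ι : Type*} {l : Filter ι} {x : ι → E} {v : E} :
    Tendsto (fun i => toWeakSpace ℝ E (x i)) l (𝓝 (toWeakSpace ℝ E v)) ↔
      ∀ g : E →L[ℝ] ℝ, Tendsto (fun i => g (x i)) l (𝓝 (g v)) :=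
  WeakBilin.tendsto_iff_forall_eval_tendsto _ topDualPairing_flip_injective

theorem WeaklyNull.weaklyCompact_insert_range {x : ℕ → E} (hx : WeaklyNull E x) :
    WeaklyCompact E (insert 0 (range x)) := by
  have hlim : Tendsto (fun n => toWeakSpace ℝ E (x n)) atTop (𝓝 (toWeakSpace ℝ E 0)) :=
    tendsto_toWeakSpace_iff.mpr fun g => by simpa using hx g
  unfold WeaklyCompact
  rw [image_insert_eq, ← range_comp]
  exact hlim.isCompact_insert_range

theorem WeaklyNull.extend_zero {τ : ℕ → ℕ} (hτ : StrictMono τ) {w : ℕ → E}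
    (hw : WeaklyNull E w) : WeaklyNull E (Function.extend τ w 0) := by
  intro g
  convert hτ.tendsto_extend_zero (hw g) using 2 with n
  rw [Function.apply_extend g]
  congr
  ext
  simp

theorem TopologicalSpace.IsSeparable.exists_dual_seq_separating {T : Set E}
    (hT : TopologicalSpace.IsSeparable T) :
    ∃ g : ℕ → E →L[ℝ] ℝ, ∀ u ∈ T, (∀ i, g i u = 0) → u = 0 := by
  obtain ⟨c, hc, hTc⟩ := hT
  obtain ⟨d, hd⟩ := (hc.insert 0).exists_eq_range (insert_nonempty 0 c)
  choose g hg_norm hg_apply using fun i => exists_dual_vector'' ℝ (d i)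
  refine ⟨g, fun u hu hgu => norm_le_zero_iff.mp (le_of_forall_pos_lt_add fun ε hε => ?_)⟩
  have hu' : u ∈ closure (range d) := hd ▸ closure_mono (subset_insert 0 c) (hTc hu)
  obtain ⟨_, ⟨i, rfl⟩, hdist⟩ := Metric.mem_closure_iff.mp hu' (ε / 2) (half_pos hε)
  rw [dist_eq_norm] at hdist
  have hdi : ‖d i‖ ≤ ‖u - d i‖ := by
    calc ‖d i‖ = g i (d i - u) := by rw [map_sub, hgu, sub_zero, hg_apply]; rfl
      _ ≤ ‖g i‖ * ‖d i - u‖ := (le_abs_self _).trans ((g i).le_opNorm _)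
      _ ≤ ‖u - d i‖ := by
        rw [norm_sub_rev]
        exact mul_le_of_le_one_left (norm_nonneg _) (hg_norm i)
  calc ‖u‖ ≤ ‖u - d i‖ + ‖d i‖ := norm_le_norm_sub_add u (d i)
    _ < 0 + ε := by linarith

theorem WeaklyCompact.exists_subseq_weakly_tendsto {K : Set E} (hK : WeaklyCompact E K)
    {x : ℕ → E} (hx : ∀ n, x n ∈ K) :
    ∃ v ∈ K, ∃ σ : ℕ → ℕ, StrictMono σ ∧
      ∀ g : E →L[ℝ] ℝ, Tendsto (fun j => g (x (σ j))) atTop (𝓝 (g v)) := by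
  set Y := (Submodule.span ℝ (range x)).topologicalClosure
  have hxY : ∀ n, x n ∈ Y :=
    fun n => Submodule.le_topologicalClosure _ (Submodule.subset_span (mem_range_self n))
  have hY_sep : TopologicalSpace.IsSeparable (Y : Set E) := by
    rw [Submodule.topologicalClosure_coe]
    exact (countable_range x).isSeparable.span.closure
  have hY_weakClosed : IsClosed (toWeakSpace ℝ E '' Y) := by
    have h := Y.convex.toWeakSpace_closure (𝕜 := ℝ)
    rw [(Submodule.isClosed_topologicalClosure _).closure_eq] at h
    exact h ▸ isClosed_closure
  obtain ⟨g, hg⟩ := hY_sep.exists_dual_seq_separating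
  -- On `K ∩ Y` the weak topology is compact and separated by countably many functionals,
  -- hence metrizable, so sequential compactness follows.
  set C : Set (WeakSpace ℝ E) := toWeakSpace ℝ E '' (K ∩ Y)
  have : CompactSpace C := isCompact_iff_compactSpace.mp <| by
    rw [show C = _ from image_inter (toWeakSpace ℝ E).injective]
    exact hK.inter_right hY_weakClosed
  have : TopologicalSpace.MetrizableSpace C := by
    refine Metric.PiNatEmbed.TopologicalSpace.MetrizableSpace.of_countable_separating
      (fun i (w : C) => g i ((toWeakSpace ℝ E).symm w))
      (fun i => (continuous_dual_apply_weakSpace (g i)).comp continuous_subtype_val) ?_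
    rintro ⟨_, u₁, hu₁, rfl⟩ ⟨_, u₂, hu₂, rfl⟩ hne
    by_contra! heq
    have h : u₁ - u₂ = 0 := hg _ (Y.sub_mem hu₁.2 hu₂.2) fun i => by
      simpa [sub_eq_zero] using heq i
    exact hne (Subtype.ext (congrArg (toWeakSpace ℝ E) (sub_eq_zero.mp h)))
  obtain ⟨⟨_, v, hv, rfl⟩, σ, hσ, hlim⟩ :=
    CompactSpace.tendsto_subseq fun n => (⟨toWeakSpace ℝ E (x n), x n, ⟨hx n, hxY n⟩, rfl⟩ : C)
  refine ⟨v, hv.1, σ, hσ, tendsto_toWeakSpace_iff.mp ?_⟩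
  exact (continuous_subtype_val.tendsto _).comp hlim

end WeakTopology

section Functionals

variable {E : Type*} [NormedAddCommGroup E] [NormedSpace ℝ E]

theorem WeakStarNull.exists_norm_le [CompleteSpace E] {f : ℕ → E →L[ℝ] ℝ}
    (hf : WeakStarNull E f) : ∃ C, ∀ n, ‖f n‖ ≤ C :=
  banach_steinhaus fun x => by
    obtain ⟨b, hb⟩ := (hf x).norm.bddAbove_range
    exact ⟨b, fun i => hb (mem_range_self i)⟩

theorem abs_apply_le_of_norm_le {φ : E →L[ℝ] ℝ} {C : ℝ} (hφ : ‖φ‖ ≤ C) {z : E}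
    (hz : z ∈ closedBall (0 : E) 1) : |φ z| ≤ C :=
  (φ.le_opNorm z).trans <|
    (mul_le_of_le_one_right (norm_nonneg φ) (mem_closedBall_zero_iff.mp hz)).trans hφ

theorem sSup_abs_apply_nonneg (φ : E →L[ℝ] ℝ) (K : Set E) :
    0 ≤ sSup ((fun z => |φ z|) '' K) :=
  Real.sSup_nonneg <| by rintro _ ⟨z, -, rfl⟩; exact abs_nonneg _

theorem sSup_abs_apply_le_of_norm_le {φ : E →L[ℝ] ℝ} {C : ℝ} (hφ : ‖φ‖ ≤ C) {K : Set E}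
    (hK : K ⊆ closedBall 0 1) : sSup ((fun z => |φ z|) '' K) ≤ C :=
  Real.sSup_le (by rintro _ ⟨z, hz, rfl⟩; exact abs_apply_le_of_norm_le hφ (hK hz))
    ((norm_nonneg φ).trans hφ)

theorem bddAbove_abs_apply_of_norm_le {φ : E →L[ℝ] ℝ} {C : ℝ} (hφ : ‖φ‖ ≤ C) {K : Set E}
    (hK : K ⊆ closedBall 0 1) : BddAbove ((fun z => |φ z|) '' K) :=
  ⟨C, by rintro _ ⟨z, hz, rfl⟩; exact abs_apply_le_of_norm_le hφ (hK hz)⟩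

end Functionals

section AlphaBeta

variable {E : Type*} [NormedAddCommGroup E] [NormedSpace ℝ E] {f : ℕ → E →L[ℝ] ℝ} {C : ℝ}

theorem limsup_le_betaQ (hC : ∀ n, ‖f n‖ ≤ C) {x : ℕ → E}
    (hx : ∀ n, x n ∈ closedBall (0 : E) 1) (hxw : WeaklyNull E x) :
    limsup (fun n => |f n (x n)|) atTop ≤ betaQ f := by
  refine le_csSup ⟨C, ?_⟩ ⟨x, hx, hxw, rfl⟩
  rintro _ ⟨y, hy, -, rfl⟩
  exact limsup_le_of_le (isCoboundedUnder_le_of_le atTop fun n => abs_nonneg _)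
    (.of_forall fun n => abs_apply_le_of_norm_le (hC n) (hy n))

theorem limsup_le_alphaQ (hC : ∀ n, ‖f n‖ ≤ C) {K : Set E} (hK1 : K ⊆ closedBall 0 1)
    (hKw : WeaklyCompact E K) :
    limsup (fun n => sSup ((fun z => |f n z|) '' K)) atTop ≤ alphaQ f := by
  refine le_csSup ⟨C, ?_⟩ ⟨K, hK1, hKw, rfl⟩
  rintro _ ⟨L, hL1, -, rfl⟩
  exact limsup_le_of_le (isCoboundedUnder_le_of_le atTop fun n => sSup_abs_apply_nonneg _ _)
    (.of_forall fun n => sSup_abs_apply_le_of_norm_le (hC n) hL1)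

theorem betaQ_nonneg (hC : ∀ n, ‖f n‖ ≤ C) : 0 ≤ betaQ f := by
  simpa using limsup_le_betaQ hC (x := 0) (fun _ => mem_closedBall_self zero_le_one)
    fun g => by simp

theorem alphaQ_nonneg (hC : ∀ n, ‖f n‖ ≤ C) : 0 ≤ alphaQ f := by
  simpa using limsup_le_alphaQ hC (K := ∅) (empty_subset _) (by simp [WeaklyCompact])

theorem betaQ_le_alphaQ (hC : ∀ n, ‖f n‖ ≤ C) : betaQ f ≤ alphaQ f := by
  refine Real.sSup_le ?_ (alphaQ_nonneg hC)
  rintro _ ⟨x, hx, hxw, rfl⟩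
  have hK1 : insert 0 (range x) ⊆ closedBall (0 : E) 1 :=
    insert_subset (mem_closedBall_self zero_le_one) (range_subset_iff.mpr hx)
  refine (limsup_le_limsup ?_ ?_ ?_).trans
    (limsup_le_alphaQ hC hK1 hxw.weaklyCompact_insert_range)
  · exact .of_forall fun n => le_csSup (bddAbove_abs_apply_of_norm_le (hC n) hK1)
      (mem_image_of_mem _ (mem_insert_of_mem _ (mem_range_self n)))
  · exact isCoboundedUnder_le_of_le atTop fun n => abs_nonneg _
  · exact isBoundedUnder_of ⟨C, fun n => sSup_abs_apply_le_of_norm_le (hC n) hK1⟩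

theorem exists_strictMono_lt_abs_apply_of_lt_limsup {K : Set E} (hK : K.Nonempty) {η : ℝ}
    (hη : η < limsup (fun n => sSup ((fun z => |f n z|) '' K)) atTop) :
    ∃ ψ : ℕ → ℕ, StrictMono ψ ∧ ∃ z : ℕ → E, (∀ j, z j ∈ K) ∧ ∀ j, η < |f (ψ j) (z j)| := by
  have hfreq : ∃ᶠ n in atTop, ∃ z ∈ K, η < |f n z| := by
    refine (frequently_lt_of_lt_limsup
      (isCoboundedUnder_le_of_le atTop fun n => sSup_abs_apply_nonneg _ _) hη).mono ?_
    intro n hn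
    obtain ⟨_, ⟨z, hz, rfl⟩, hlt⟩ := exists_lt_of_lt_csSup (hK.image _) hn
    exact ⟨z, hz, hlt⟩
  obtain ⟨ψ, hψ, hψK⟩ := extraction_of_frequently_atTop hfreq
  choose z hzK hz using hψK
  exact ⟨ψ, hψ, z, hzK, hz⟩

theorem limsup_sSup_abs_apply_le_two_mul_betaQ (hC : ∀ n, ‖f n‖ ≤ C) (hf : WeakStarNull E f)
    {K : Set E} (hK1 : K ⊆ closedBall 0 1) (hKw : WeaklyCompact E K) :
    limsup (fun n => sSup ((fun z => |f n z|) '' K)) atTop ≤ 2 * betaQ f := by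
  set L := limsup (fun n => sSup ((fun z => |f n z|) '' K)) atTop
  rcases K.eq_empty_or_nonempty with rfl | hK
  · simpa [L] using betaQ_nonneg hC
  refine le_of_forall_pos_le_add fun ε hε => ?_
  obtain ⟨ψ, hψ, z, hzK, hz⟩ :=
    exists_strictMono_lt_abs_apply_of_lt_limsup hK (sub_lt_self L (half_pos hε))
  obtain ⟨v, hvK, σ, hσ, hzv⟩ := hKw.exists_subseq_weakly_tendsto hzK
  set τ := ψ ∘ σ
  have hτ : StrictMono τ := hψ.comp hσ
  -- `w` is only attached to the indices `τ j`; extend it by `0` to all `n`.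
  set w : ℕ → E := fun j => (2 : ℝ)⁻¹ • (z (σ j) - v)
  set y := Function.extend τ w 0
  have hyτ : ∀ j, y (τ j) = w j := hτ.injective.extend_apply w 0
  have hw_ball : ∀ j, w j ∈ closedBall (0 : E) 1 := fun j => by
    have hzj := mem_closedBall_zero_iff.mp (hK1 (hzK (σ j)))
    have hv := mem_closedBall_zero_iff.mp (hK1 hvK)
    rw [mem_closedBall_zero_iff, norm_smul, norm_inv, Real.norm_ofNat]
    linarith [norm_sub_le (z (σ j)) v]
  have hy_ball : ∀ n, y n ∈ closedBall (0 : E) 1 := fun n => by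
    by_cases h : ∃ j, τ j = n
    · obtain ⟨j, rfl⟩ := h
      exact hyτ j ▸ hw_ball j
    · simp [y, Function.extend_apply' _ _ _ h]
  have hw_null : WeaklyNull E w := fun g => by
    simpa [w] using ((hzv g).sub_const (g v)).const_mul (2 : ℝ)⁻¹
  have hfv : ∀ᶠ j in atTop, |f (τ j) v| < ε / 2 :=
    ((hf v).comp hτ.tendsto_atTop).abs.eventually (gt_mem_nhds (by simpa using half_pos hε))
  have hlower : ∃ᶠ n in atTop, (L - ε) / 2 ≤ |f n (y n)| := by
    refine hτ.tendsto_atTop.frequently (Eventually.frequently ?_)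
    filter_upwards [hfv] with j hj
    have hyj : |f (τ j) (y (τ j))| = |f (τ j) (z (σ j)) - f (τ j) v| / 2 := by
      rw [hyτ, map_smul, map_sub, smul_eq_mul, abs_mul, abs_inv, abs_two, inv_mul_eq_div]
    have hzj : L - ε / 2 < |f (τ j) (z (σ j))| := hz (σ j)
    rw [hyj]
    linarith [abs_sub_abs_le_abs_sub (f (τ j) (z (σ j))) (f (τ j) v)]
  have hβ : (L - ε) / 2 ≤ betaQ f :=
    (le_limsup_of_frequently_le hlower
      (isBoundedUnder_of ⟨C, fun n => abs_apply_le_of_norm_le (hC n) (hy_ball n)⟩)).trans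
      (limsup_le_betaQ hC hy_ball (hw_null.extend_zero hτ))
  linarith

theorem alphaQ_le_two_mul_betaQ (hC : ∀ n, ‖f n‖ ≤ C) (hf : WeakStarNull E f) :
    alphaQ f ≤ 2 * betaQ f :=
  Real.sSup_le
    (by rintro _ ⟨K, hK1, hKw, rfl⟩; exact limsup_sSup_abs_apply_le_two_mul_betaQ hC hf hK1 hKw)
    (mul_nonneg zero_le_two (betaQ_nonneg hC))

end AlphaBeta

theorem stmt0 {X : Type*} [NormedAddCommGroup X] [NormedSpace ℝ X] [CompleteSpace X]
    (f : ℕ → X →L[ℝ] ℝ) (hf : WeakStarNull X f) :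
    betaQ f ≤ alphaQ f ∧ alphaQ f ≤ 2 * betaQ f := by
  obtain ⟨C, hC⟩ := hf.exists_norm_le
  exact ⟨betaQ_le_alphaQ hC, alphaQ_le_two_mul_betaQ hC hf⟩
end
end

section
/- Let (f_n) be a sequence in X* converging to f ∈ X* in the weak* topology. Then α((f_n − f)) ≤ ca_{ρ*}((f_n)). -/
open Filter Topology Metric Set NormedSpace

noncomputable section

variable (X : Type*) [NormedAddCommGroup X] [NormedSpace ℝ X]

variable {X}

variable (X)

/-! For `m ≥ n` and `x ∈ K`, `|⟨f_m - f, x⟩|` is the limit in `l` of `|⟨f_m - f_l, x⟩|`, hence at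
most `sup_{k,l ≥ n} sup_{x ∈ K} |⟨f_k - f_l, x⟩|`; taking the limsup in `m`, the infimum over `n` and
the supremum over `K` gives the inequality. Banach–Steinhaus bounds `(f_n)` uniformly, which keeps
all these real suprema finite rather than junk. -/

theorem ContinuousLinearMap.exists_norm_le_of_tendsto_apply {𝕜 E F : Type*}
    [NontriviallyNormedField 𝕜] [NormedAddCommGroup E] [NormedSpace 𝕜 E] [CompleteSpace E]
    [NormedAddCommGroup F] [NormedSpace 𝕜 F] {g : ℕ → E →L[𝕜] F} {g₀ : E → F}
    (h : ∀ x, Tendsto (fun n => g n x) atTop (𝓝 (g₀ x))) : ∃ C, ∀ n, ‖g n‖ ≤ C :=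
  banach_steinhaus fun x =>
    let ⟨c, hc⟩ := (h x).norm.bddAbove_range
    ⟨c, fun n => hc ⟨n, rfl⟩⟩

theorem weaklyCompact_empty {X : Type*} [NormedAddCommGroup X] [NormedSpace ℝ X] :
    WeaklyCompact X ∅ := by
  simp [WeaklyCompact]

section TailOscillation

variable {X : Type*} [NormedAddCommGroup X] [NormedSpace ℝ X]
  {f : ℕ → X →L[ℝ] ℝ} {K : Set X} {C : ℝ}

/-- `sup_{k,l ≥ n} sup_{x ∈ K} |⟨f_k - f_l, x⟩|`, the quantity under the infimum in `caRho`. -/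
def tailOscillation (f : ℕ → X →L[ℝ] ℝ) (K : Set X) (n : ℕ) : ℝ :=
  sSup { t | ∃ k ≥ n, ∃ l ≥ n, ∃ x ∈ K, t = |(f k - f l) x| }

theorem caRho_eq_sSup_iInf_tailOscillation (f : ℕ → X →L[ℝ] ℝ) :
    caRho f = sSup { r | ∃ K : Set X, K ⊆ closedBall 0 1 ∧ WeaklyCompact X K ∧
      r = ⨅ n, tailOscillation f K n } :=
  rfl

theorem tailOscillation_nonneg (n : ℕ) : 0 ≤ tailOscillation f K n :=
  Real.sSup_nonneg <| by
    rintro t ⟨k, -, l, -, x, -, rfl⟩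
    exact abs_nonneg _

theorem abs_sub_apply_le (hC : ∀ n, ‖f n‖ ≤ C) (hK : K ⊆ closedBall 0 1) (k l : ℕ)
    {x : X} (hx : x ∈ K) : |(f k - f l) x| ≤ 2 * C := by
  have hx1 : ‖x‖ ≤ 1 := by simpa using hK hx
  calc |(f k - f l) x| ≤ ‖f k - f l‖ * ‖x‖ := (f k - f l).le_opNorm x
    _ ≤ ‖f k - f l‖ := mul_le_of_le_one_right (norm_nonneg _) hx1
    _ ≤ ‖f k‖ + ‖f l‖ := norm_sub_le _ _
    _ ≤ C + C := add_le_add (hC k) (hC l)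
    _ = 2 * C := (two_mul C).symm

theorem tailOscillation_le (hC : ∀ n, ‖f n‖ ≤ C) (hK : K ⊆ closedBall 0 1) (n : ℕ) :
    tailOscillation f K n ≤ 2 * C := by
  have hC0 : 0 ≤ C := (norm_nonneg _).trans (hC 0)
  refine Real.sSup_le ?_ (by positivity)
  rintro t ⟨k, -, l, -, x, hx, rfl⟩
  exact abs_sub_apply_le hC hK k l hx

theorem abs_sub_apply_le_tailOscillation (hC : ∀ n, ‖f n‖ ≤ C) (hK : K ⊆ closedBall 0 1)
    {n k l : ℕ} (hk : n ≤ k) (hl : n ≤ l) {x : X} (hx : x ∈ K) :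
    |(f k - f l) x| ≤ tailOscillation f K n := by
  refine le_csSup ⟨2 * C, ?_⟩ ⟨k, hk, l, hl, x, hx, rfl⟩
  rintro t ⟨k, -, l, -, x, hx, rfl⟩
  exact abs_sub_apply_le hC hK k l hx

variable {f₀ : X →L[ℝ] ℝ}

theorem sSup_abs_sub_limit_apply_le_tailOscillation
    (hconv : ∀ x, Tendsto (fun n => f n x) atTop (𝓝 (f₀ x)))
    (hC : ∀ n, ‖f n‖ ≤ C) (hK : K ⊆ closedBall 0 1) {n m : ℕ} (hm : n ≤ m) :
    sSup ((fun x => |(f m - f₀) x|) '' K) ≤ tailOscillation f K n := by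
  refine Real.sSup_le ?_ (tailOscillation_nonneg n)
  rintro t ⟨x, hx, rfl⟩
  have hlim : Tendsto (fun l => |(f m - f l) x|) atTop (𝓝 |(f m - f₀) x|) :=
    ((tendsto_const_nhds (x := f m x)).sub (hconv x)).abs
  refine le_of_tendsto hlim ?_
  filter_upwards [eventually_ge_atTop n] with l hl
  exact abs_sub_apply_le_tailOscillation hC hK hm hl hx

theorem limsup_sSup_abs_sub_limit_apply_le_tailOscillation
    (hconv : ∀ x, Tendsto (fun n => f n x) atTop (𝓝 (f₀ x)))
    (hC : ∀ n, ‖f n‖ ≤ C) (hK : K ⊆ closedBall 0 1) (n : ℕ) :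
    limsup (fun m => sSup ((fun x => |(f m - f₀) x|) '' K)) atTop ≤ tailOscillation f K n := by
  refine limsup_le_of_le (isCoboundedUnder_le_of_le atTop (x := 0) fun m => ?_) ?_
  · refine Real.sSup_nonneg ?_
    rintro t ⟨x, -, rfl⟩
    exact abs_nonneg _
  · filter_upwards [eventually_ge_atTop n] with m hm
    exact sSup_abs_sub_limit_apply_le_tailOscillation hconv hC hK hm

theorem iInf_tailOscillation_le_caRho (hC : ∀ n, ‖f n‖ ≤ C) (hK : K ⊆ closedBall 0 1)
    (hKc : WeaklyCompact X K) : ⨅ n, tailOscillation f K n ≤ caRho f := by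
  rw [caRho_eq_sSup_iInf_tailOscillation]
  refine le_csSup ⟨2 * C, ?_⟩ ⟨K, hK, hKc, rfl⟩
  rintro r ⟨K', hK', -, rfl⟩
  exact (ciInf_le ⟨0, by rintro _ ⟨n, rfl⟩; exact tailOscillation_nonneg n⟩ 0).trans
    (tailOscillation_le hC hK' 0)

theorem caRho_nonneg (hC : ∀ n, ‖f n‖ ≤ C) : 0 ≤ caRho f :=
  (Real.iInf_nonneg fun n => tailOscillation_nonneg n).trans
    (iInf_tailOscillation_le_caRho hC (empty_subset _) weaklyCompact_empty)

end TailOscillation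

theorem stmt2 {X : Type*} [NormedAddCommGroup X] [NormedSpace ℝ X] [CompleteSpace X]
    (f : ℕ → X →L[ℝ] ℝ) (f₀ : X →L[ℝ] ℝ)
    (hconv : ∀ x : X, Tendsto (fun n => f n x) atTop (𝓝 (f₀ x))) :
    alphaQ (fun n => f n - f₀) ≤ caRho f := by
  obtain ⟨C, hC⟩ := ContinuousLinearMap.exists_norm_le_of_tendsto_apply hconv
  refine Real.sSup_le ?_ (caRho_nonneg hC)
  rintro r ⟨K, hK, hKc, rfl⟩
  exact (le_ciInf (limsup_sSup_abs_sub_limit_apply_le_tailOscillation hconv hC hK)).trans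
    (iInf_tailOscillation_le_caRho hC hK hKc)
end
end

section
/- For any Banach space X, K₁(X) ≤ K₃(X) ≤ 4K₁(X), where K₃(X) = sup over weak* Cauchy sequences (f_n) in B_{X*} of inf over convex block subsequences (g_n) of ca_{ρ*}((g_n)). -/
open Filter Topology Metric Set NormedSpace

noncomputable section

variable (X : Type*) [NormedAddCommGroup X] [NormedSpace ℝ X]

variable {X}

variable (X)

/-! For a weak* null sequence `g`, letting `l → ∞` in `|⟨g_k - g_l, x⟩|` bounds
`sup_{x ∈ K} |⟨g_k, x⟩|` by the tail oscillation on `K`, so `α ≤ ca_{ρ*}`; since convex blocks of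
weak* null sequences are weak* null, `K₁ ≤ K₃`.
Conversely, a weak* Cauchy sequence `f` in the unit ball has a weak* limit `F` of norm at most one,
so `f = 2h + F` with `h` weak* null in the unit ball. A convex block `g` of `h` gives the convex
block `2g + F` of `f`, and `|⟨2(g_k - g_l), x⟩| ≤ 2(|⟨g_k, x⟩| + |⟨g_l, x⟩|)` yields
`ca_{ρ*}(2g + F) ≤ 4 α(g)`, whence `K₃ ≤ 4 K₁`. -/

namespace IsConvexBlock

section

variable {E F : Type*} [AddCommGroup E] [Module ℝ E] [AddCommGroup F] [Module ℝ F]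
  {x y : ℕ → E}

theorem refl (x : ℕ → E) : IsConvexBlock x x :=
  ⟨id, rfl, strictMono_id, fun n => subset_convexHull ℝ _ ⟨n, ⟨le_rfl, n.lt_succ_self⟩, rfl⟩⟩

theorem map (h : IsConvexBlock x y) (φ : E →ᵃ[ℝ] F) : IsConvexBlock (φ ∘ x) (φ ∘ y) := by
  obtain ⟨k, hk0, hk, hy⟩ := h
  refine ⟨k, hk0, hk, fun n => ?_⟩
  rw [Set.image_comp, ← φ.image_convexHull]
  exact Set.mem_image_of_mem φ (hy n)

theorem mem_of_convex (h : IsConvexBlock x y) {s : Set E} (hs : Convex ℝ s)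
    (hx : ∀ n, x n ∈ s) (n : ℕ) : y n ∈ s := by
  obtain ⟨k, -, -, hy⟩ := h
  exact convexHull_min (Set.image_subset_iff.2 fun m _ => hx m) hs (hy n)

theorem tendsto [TopologicalSpace E] [LocallyConvexSpace ℝ E] (h : IsConvexBlock x y) {c : E}
    (hx : Tendsto x atTop (𝓝 c)) : Tendsto y atTop (𝓝 c) := by
  obtain ⟨k, -, hk, hy⟩ := h
  refine ((LocallyConvexSpace.convex_basis (𝕜 := ℝ) c).tendsto_right_iff).2 fun s ⟨hs, hsc⟩ => ?_
  obtain ⟨N, hN⟩ := eventually_atTop.1 (hx hs)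
  refine eventually_atTop.2 ⟨N, fun n hn => convexHull_min ?_ hsc (hy n)⟩
  rintro _ ⟨m, hm, rfl⟩
  exact hN m (hn.trans (hk.id_le n) |>.trans hm.1)

end

theorem norm_le {E : Type*} [SeminormedAddCommGroup E] [NormedSpace ℝ E] {x y : ℕ → E}
    (h : IsConvexBlock x y) {C : ℝ} (hx : ∀ n, ‖x n‖ ≤ C) (n : ℕ) : ‖y n‖ ≤ C := by
  simpa using h.mem_of_convex (convex_closedBall 0 C) (by simpa using hx) n

end IsConvexBlock

section

variable {E : Type*} [AddCommGroup E] [Module ℝ E] {q : (ℕ → E) → ℝ} {f g : ℕ → E}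

def cbsInf (q : (ℕ → E) → ℝ) (f : ℕ → E) : ℝ :=
  sInf { s | ∃ g, IsConvexBlock f g ∧ s = q g }

theorem cbsInf_nonneg (hq : ∀ g, 0 ≤ q g) (f : ℕ → E) : 0 ≤ cbsInf q f :=
  Real.sInf_nonneg <| by rintro _ ⟨g, -, rfl⟩; exact hq g

theorem cbsInf_le (hq : ∀ g, 0 ≤ q g) (h : IsConvexBlock f g) : cbsInf q f ≤ q g :=
  csInf_le ⟨0, by rintro _ ⟨g, -, rfl⟩; exact hq g⟩ ⟨g, h, rfl⟩

theorem le_cbsInf {a : ℝ} (h : ∀ g, IsConvexBlock f g → a ≤ q g) : a ≤ cbsInf q f :=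
  le_csInf ⟨q f, f, .refl f, rfl⟩ <| by rintro _ ⟨g, hg, rfl⟩; exact h g hg

end

section

variable {X : Type*} [NormedAddCommGroup X] [NormedSpace ℝ X]
  {f g : ℕ → X →L[ℝ] ℝ} {K : Set X}

theorem WeakStarNull.of_isConvexBlock (hf : WeakStarNull X f) (h : IsConvexBlock f g) :
    WeakStarNull X g := fun x =>
  (h.map (ContinuousLinearMap.apply ℝ ℝ x : (X →L[ℝ] ℝ) →ₗ[ℝ] ℝ).toAffineMap).tendsto (hf x)

theorem WeakStarCauchy.exists_tendsto (hf : WeakStarCauchy X f) {C : ℝ} (hC : ∀ n, ‖f n‖ ≤ C) :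
    ∃ F : X →L[ℝ] ℝ, ‖F‖ ≤ C ∧ ∀ x, Tendsto (fun n => f n x) atTop (𝓝 (F x)) := by
  choose L hL using hf
  have hbdd : Bornology.IsBounded (Set.range f) :=
    isBounded_iff_forall_norm_le.2 ⟨C, by rintro _ ⟨n, rfl⟩; exact hC n⟩
  let F := ContinuousLinearMap.ofTendstoOfBoundedRange L f (tendsto_pi_nhds.2 hL) hbdd
  have hC0 : 0 ≤ C := (norm_nonneg _).trans (hC 0)
  refine ⟨F, F.opNorm_le_bound hC0 fun x => ?_, hL⟩
  exact le_of_tendsto (hL x).norm (Eventually.of_forall fun n => (f n).le_of_opNorm_le (hC n) x)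

theorem WeakStarCauchy.exists_eq_two_smul_add (hcauchy : WeakStarCauchy X f)
    (hf : ∀ n, ‖f n‖ ≤ 1) : ∃ (F : X →L[ℝ] ℝ) (h : ℕ → X →L[ℝ] ℝ),
      (∀ n, ‖h n‖ ≤ 1) ∧ WeakStarNull X h ∧ f = fun n => (2 : ℝ) • h n + F := by
  obtain ⟨F, hF, hlim⟩ := hcauchy.exists_tendsto hf
  refine ⟨F, fun n => (2⁻¹ : ℝ) • (f n - F), fun n => ?_, fun x => ?_, ?_⟩
  · rw [norm_smul, Real.norm_of_nonneg (by norm_num)]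
    linarith [norm_sub_le (f n) F, hf n]
  · simpa using ((hlim x).sub_const (F x)).const_mul (2⁻¹ : ℝ)
  · funext n
    rw [smul_smul]
    simp

def supAbsOn (g : ℕ → X →L[ℝ] ℝ) (K : Set X) (n : ℕ) : ℝ :=
  sSup ((fun x => |g n x|) '' K)

def tailOscOn (g : ℕ → X →L[ℝ] ℝ) (K : Set X) (n : ℕ) : ℝ :=
  sSup { t | ∃ k ≥ n, ∃ l ≥ n, ∃ x ∈ K, t = |(g k - g l) x| }

theorem abs_apply_le_one {φ : X →L[ℝ] ℝ} (hφ : ‖φ‖ ≤ 1) {x : X} (hx : x ∈ closedBall (0 : X) 1) :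
    |φ x| ≤ 1 :=
  (φ.unit_le_opNorm x (mem_closedBall_zero_iff.1 hx)).trans hφ

theorem abs_sub_apply_le_two {φ ψ : X →L[ℝ] ℝ} (hφ : ‖φ‖ ≤ 1) (hψ : ‖ψ‖ ≤ 1) {x : X}
    (hx : x ∈ closedBall (0 : X) 1) : |(φ - ψ) x| ≤ 2 := by
  rw [sub_apply]
  linarith [abs_sub (φ x) (ψ x), abs_apply_le_one hφ hx, abs_apply_le_one hψ hx]

theorem supAbsOn_nonneg (g : ℕ → X →L[ℝ] ℝ) (K : Set X) (n : ℕ) : 0 ≤ supAbsOn g K n :=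
  Real.sSup_nonneg <| by rintro _ ⟨x, -, rfl⟩; positivity

theorem tailOscOn_nonneg (g : ℕ → X →L[ℝ] ℝ) (K : Set X) (n : ℕ) : 0 ≤ tailOscOn g K n :=
  Real.sSup_nonneg <| by rintro _ ⟨k, -, l, -, x, -, rfl⟩; positivity

theorem limsup_supAbsOn_nonneg (g : ℕ → X →L[ℝ] ℝ) (K : Set X) :
    0 ≤ limsup (supAbsOn g K) atTop := by
  rw [limsup_eq]
  exact Real.sInf_nonneg fun d hd =>
    hd.exists.elim fun n hn => (supAbsOn_nonneg g K n).trans hn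

theorem iInf_tailOscOn_nonneg (g : ℕ → X →L[ℝ] ℝ) (K : Set X) : 0 ≤ ⨅ n, tailOscOn g K n :=
  Real.iInf_nonneg (tailOscOn_nonneg g K)

theorem alphaQ_nonneg_s7 (g : ℕ → X →L[ℝ] ℝ) : 0 ≤ alphaQ g :=
  Real.sSup_nonneg <| by rintro _ ⟨K, -, -, rfl⟩; exact limsup_supAbsOn_nonneg g K

theorem caRho_nonneg_s7 (g : ℕ → X →L[ℝ] ℝ) : 0 ≤ caRho g :=
  Real.sSup_nonneg <| by rintro _ ⟨K, -, -, rfl⟩; exact iInf_tailOscOn_nonneg g K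

variable (hg : ∀ n, ‖g n‖ ≤ 1)
include hg

section

variable (hK : K ⊆ closedBall 0 1)
include hK

theorem supAbsOn_le_one (n : ℕ) : supAbsOn g K n ≤ 1 :=
  Real.sSup_le (by rintro _ ⟨x, hx, rfl⟩; exact abs_apply_le_one (hg n) (hK hx)) zero_le_one

theorem abs_apply_le_supAbsOn {x : X} (hx : x ∈ K) (n : ℕ) : |g n x| ≤ supAbsOn g K n :=
  le_csSup ⟨1, by rintro _ ⟨y, hy, rfl⟩; exact abs_apply_le_one (hg n) (hK hy)⟩ ⟨x, hx, rfl⟩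

theorem tailOscOn_le_two (n : ℕ) : tailOscOn g K n ≤ 2 :=
  Real.sSup_le
    (by rintro _ ⟨k, -, l, -, x, hx, rfl⟩; exact abs_sub_apply_le_two (hg k) (hg l) (hK hx))
    zero_le_two

theorem abs_sub_apply_le_tailOscOn {n k l : ℕ} (hk : n ≤ k) (hl : n ≤ l) {x : X} (hx : x ∈ K) :
    |(g k - g l) x| ≤ tailOscOn g K n :=
  le_csSup
    ⟨2, by rintro _ ⟨k, -, l, -, y, hy, rfl⟩; exact abs_sub_apply_le_two (hg k) (hg l) (hK hy)⟩
    ⟨k, hk, l, hl, x, hx, rfl⟩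

theorem limsup_supAbsOn_le_one : limsup (supAbsOn g K) atTop ≤ 1 :=
  limsup_le_of_le (isBoundedUnder_of ⟨0, supAbsOn_nonneg g K⟩).isCoboundedUnder_le
    (Eventually.of_forall (supAbsOn_le_one hg hK))

theorem iInf_tailOscOn_le_two : ⨅ n, tailOscOn g K n ≤ 2 :=
  (ciInf_le ⟨0, by rintro _ ⟨n, rfl⟩; exact tailOscOn_nonneg g K n⟩ 0).trans
    (tailOscOn_le_two hg hK 0)

theorem limsup_supAbsOn_le_alphaQ (hKc : WeaklyCompact X K) :
    limsup (supAbsOn g K) atTop ≤ alphaQ g :=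
  le_csSup ⟨1, by rintro _ ⟨K, hK, -, rfl⟩; exact limsup_supAbsOn_le_one hg hK⟩ ⟨K, hK, hKc, rfl⟩

theorem iInf_tailOscOn_le_caRho (hKc : WeaklyCompact X K) : ⨅ n, tailOscOn g K n ≤ caRho g :=
  le_csSup ⟨2, by rintro _ ⟨K, hK, -, rfl⟩; exact iInf_tailOscOn_le_two hg hK⟩ ⟨K, hK, hKc, rfl⟩

theorem limsup_supAbsOn_le_iInf_tailOscOn (hnull : WeakStarNull X g) :
    limsup (supAbsOn g K) atTop ≤ ⨅ n, tailOscOn g K n := by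
  refine le_ciInf fun n => limsup_le_of_le
    (isBoundedUnder_of ⟨0, supAbsOn_nonneg g K⟩).isCoboundedUnder_le
    (eventually_atTop.2 ⟨n, fun k hk => Real.sSup_le ?_ (tailOscOn_nonneg g K n)⟩)
  rintro _ ⟨x, hx, rfl⟩
  -- `g l x → 0`, so `|g k x|` is the limit of `|(g k - g l) x|` as `l → ∞`
  have hlim : Tendsto (fun l => |(g k - g l) x|) atTop (𝓝 |g k x|) := by
    simpa using (tendsto_const_nhds (x := g k x)).sub (hnull x) |>.abs
  exact le_of_tendsto hlim
    (eventually_atTop.2 ⟨n, fun l hl => abs_sub_apply_le_tailOscOn hg hK hk hl hx⟩)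

theorem iInf_tailOscOn_smul_add_const_le {c : ℝ} (hc : 0 ≤ c) (F : X →L[ℝ] ℝ) :
    ⨅ n, tailOscOn (fun n => c • g n + F) K n ≤ 2 * c * limsup (supAbsOn g K) atTop := by
  have hne : {d | ∀ᶠ m in atTop, supAbsOn g K m ≤ d}.Nonempty :=
    ⟨1, Eventually.of_forall (supAbsOn_le_one hg hK)⟩
  rw [limsup_eq, ← smul_eq_mul, ← Real.sInf_smul_of_nonneg (by positivity)]
  refine le_csInf hne.smul_set ?_
  rintro _ ⟨d, hd, rfl⟩
  obtain ⟨N, hN⟩ := eventually_atTop.1 hd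
  have hd0 : 0 ≤ d := (supAbsOn_nonneg g K N).trans (hN N le_rfl)
  refine (ciInf_le ⟨0, ?_⟩ N).trans (Real.sSup_le ?_ (by positivity))
  · rintro _ ⟨n, rfl⟩; exact tailOscOn_nonneg _ K n
  rintro _ ⟨k, hk, l, hl, x, hx, rfl⟩
  have hkl : ((c • g k + F) - (c • g l + F)) x = c * (g k x - g l x) := by simp [mul_sub]
  simp only [hkl, abs_mul, abs_of_nonneg hc, smul_eq_mul]
  calc c * |g k x - g l x| ≤ c * (|g k x| + |g l x|) := by gcongr; exact abs_sub _ _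
    _ ≤ c * (d + d) := by
      gcongr
      · exact (abs_apply_le_supAbsOn hg hK hx k).trans (hN k hk)
      · exact (abs_apply_le_supAbsOn hg hK hx l).trans (hN l hl)
    _ = 2 * c * d := by ring

end

theorem alphaQ_le_one : alphaQ g ≤ 1 :=
  Real.sSup_le (by rintro _ ⟨K, hK, -, rfl⟩; exact limsup_supAbsOn_le_one hg hK) zero_le_one

theorem caRho_le_two : caRho g ≤ 2 :=
  Real.sSup_le (by rintro _ ⟨K, hK, -, rfl⟩; exact iInf_tailOscOn_le_two hg hK) zero_le_two

theorem alphaQ_le_caRho (hnull : WeakStarNull X g) : alphaQ g ≤ caRho g :=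
  Real.sSup_le (by
    rintro _ ⟨K, hK, hKc, rfl⟩
    exact (limsup_supAbsOn_le_iInf_tailOscOn hg hK hnull).trans
      (iInf_tailOscOn_le_caRho hg hK hKc)) (caRho_nonneg_s7 g)

theorem caRho_smul_add_const_le {c : ℝ} (hc : 0 ≤ c) (F : X →L[ℝ] ℝ) :
    caRho (fun n => c • g n + F) ≤ 2 * c * alphaQ g :=
  Real.sSup_le (by
    rintro _ ⟨K, hK, hKc, rfl⟩
    exact (iInf_tailOscOn_smul_add_const_le hg hK hc F).trans
      (by gcongr; exact limsup_supAbsOn_le_alphaQ hg hK hKc))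
    (by have := alphaQ_nonneg_s7 g; positivity)

end

section

variable {X : Type*} [NormedAddCommGroup X] [NormedSpace ℝ X] {f : ℕ → X →L[ℝ] ℝ}

theorem cbsInf_alphaQ_le_cbsInf_caRho (hf : ∀ n, ‖f n‖ ≤ 1) (hnull : WeakStarNull X f) :
    cbsInf alphaQ f ≤ cbsInf caRho f :=
  le_cbsInf fun _ hg => (cbsInf_le alphaQ_nonneg_s7 hg).trans
    (alphaQ_le_caRho (hg.norm_le hf) (hnull.of_isConvexBlock hg))

theorem cbsInf_caRho_smul_add_const_le {h : ℕ → X →L[ℝ] ℝ} (hh : ∀ n, ‖h n‖ ≤ 1) {c : ℝ}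
    (hc : 0 ≤ c) (F : X →L[ℝ] ℝ) :
    cbsInf caRho (fun n => c • h n + F) ≤ 2 * c * cbsInf alphaQ h := by
  let φ : (X →L[ℝ] ℝ) →ᵃ[ℝ] (X →L[ℝ] ℝ) :=
    (c • LinearMap.id).toAffineMap + AffineMap.const ℝ _ F
  rw [cbsInf, cbsInf, ← smul_eq_mul, ← Real.sInf_smul_of_nonneg (by positivity)]
  have hne : {s | ∃ g, IsConvexBlock h g ∧ s = alphaQ g}.Nonempty := ⟨_, h, .refl h, rfl⟩
  refine le_csInf hne.smul_set ?_
  rintro _ ⟨_, ⟨g, hg, rfl⟩, rfl⟩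
  exact (cbsInf_le caRho_nonneg_s7 (hg.map φ)).trans (caRho_smul_add_const_le (hg.norm_le hh) hc F)

variable (X)

theorem K1_nonneg : 0 ≤ K1 X :=
  Real.sSup_nonneg <| by rintro _ ⟨f, -, -, rfl⟩; exact cbsInf_nonneg alphaQ_nonneg_s7 f

theorem K3_nonneg : 0 ≤ K3 X :=
  Real.sSup_nonneg <| by rintro _ ⟨f, -, -, rfl⟩; exact cbsInf_nonneg caRho_nonneg_s7 f

variable {X}

theorem cbsInf_alphaQ_le_K1 (hf : ∀ n, ‖f n‖ ≤ 1) (hnull : WeakStarNull X f) :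
    cbsInf alphaQ f ≤ K1 X :=
  le_csSup ⟨1, by
    rintro _ ⟨f, hf, -, rfl⟩
    exact (cbsInf_le alphaQ_nonneg_s7 (.refl f)).trans (alphaQ_le_one hf)⟩ ⟨f, hf, hnull, rfl⟩

theorem cbsInf_caRho_le_K3 (hf : ∀ n, ‖f n‖ ≤ 1) (hcauchy : WeakStarCauchy X f) :
    cbsInf caRho f ≤ K3 X :=
  le_csSup ⟨2, by
    rintro _ ⟨f, hf, -, rfl⟩
    exact (cbsInf_le caRho_nonneg_s7 (.refl f)).trans (caRho_le_two hf)⟩ ⟨f, hf, hcauchy, rfl⟩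

end

theorem stmt7_general {X : Type*} [NormedAddCommGroup X] [NormedSpace ℝ X] :
    K1 X ≤ K3 X ∧ K3 X ≤ 4 * K1 X := by
  constructor
  · refine Real.sSup_le ?_ (K3_nonneg X)
    rintro _ ⟨f, hf, hnull, rfl⟩
    exact (cbsInf_alphaQ_le_cbsInf_caRho hf hnull).trans
      (cbsInf_caRho_le_K3 hf fun x => ⟨0, hnull x⟩)
  · refine Real.sSup_le ?_ (by linarith [K1_nonneg X])
    rintro _ ⟨f, hf, hcauchy, rfl⟩
    obtain ⟨F, h, hh, hnull, rfl⟩ := hcauchy.exists_eq_two_smul_add hf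
    calc cbsInf caRho (fun n => (2 : ℝ) • h n + F)
        ≤ 2 * 2 * cbsInf alphaQ h := cbsInf_caRho_smul_add_const_le hh zero_le_two F
      _ ≤ 4 * K1 X := by linarith [cbsInf_alphaQ_le_K1 hh hnull]

theorem stmt7 {X : Type*} [NormedAddCommGroup X] [NormedSpace ℝ X] [CompleteSpace X] :
    K1 X ≤ K3 X ∧ K3 X ≤ 4 * K1 X :=
  stmt7_general
end
end

section
/- K₂(c₀) = 1: for every ε > 0 there is a weak* null sequence (f_n) in B_{ℓ₁} = B_{c₀*} such that every convex block subsequence (g_n) of (f_n) satisfies β((g_n)) ≥ 1/(1+ε)², and K₂(c₀) ≤ 1 trivially. In particular c₀ fails property (K). -/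
open Filter Topology Metric Set NormedSpace

noncomputable section

variable (X : Type*) [NormedAddCommGroup X] [NormedSpace ℝ X]

variable {X}

variable (X)

/-!
The coordinate functionals `eₙ ∈ ℓ₁ = c₀*` form a weak* null sequence in the unit ball. A convex
block subsequence `gₙ` of it is a probability vector supported on a block `Iₙ = [kₙ, kₙ₊₁)`, so
`gₙ(1_{Iₙ}) = 1`. The indicators `1_{Iₙ}` of disjoint blocks are weakly null: choosing signs,
`∑ₙ |φ(1_{Iₙ})| ≤ ‖φ‖` for every `φ ∈ c₀*`. Hence `β(g) ≥ 1` for every convex block `g`, while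
`β ≤ 1` holds for any sequence in the unit ball. Since `{0} ∪ {1_{Iₙ}}` is weakly compact, also
`α(g) ≥ 1`, so no convex block subsequence has `α(g) = 0`.
-/

open ZeroAtInfty Function

lemma IsConvexBlock.refl_s8 {E : Type*} [AddCommGroup E] [Module ℝ E] (f : ℕ → E) :
    IsConvexBlock f f :=
  ⟨id, rfl, strictMono_id, fun n => subset_convexHull ℝ _ ⟨n, by simp, rfl⟩⟩

section

variable {X}

lemma IsConvexBlock.norm_le_one {f g : ℕ → StrongDual ℝ X} (hf : ∀ n, ‖f n‖ ≤ 1)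
    (hg : IsConvexBlock f g) (n : ℕ) : ‖g n‖ ≤ 1 := by
  obtain ⟨k, -, -, hmem⟩ := hg
  have hsub : f '' Ico (k n) (k (n + 1)) ⊆ closedBall 0 1 := by
    rintro - ⟨i, -, rfl⟩
    exact mem_closedBall_zero_iff.2 (hf i)
  exact mem_closedBall_zero_iff.1 (convexHull_min hsub (convex_closedBall 0 1) (hmem n))

lemma apply_eq_one_of_mem_convexHull {s : Set (StrongDual ℝ X)} {x : X}
    (hs : ∀ φ ∈ s, φ x = 1) {g : StrongDual ℝ X} (hg : g ∈ convexHull ℝ s) : g x = 1 :=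
  convexHull_min hs ((convex_singleton 1).linear_preimage
    (ContinuousLinearMap.apply ℝ ℝ x).toLinearMap) hg

lemma abs_apply_le_one_s8 {g : StrongDual ℝ X} (hg : ‖g‖ ≤ 1) {x : X} (hx : x ∈ closedBall 0 1) :
    |g x| ≤ 1 := by
  simpa [Real.norm_eq_abs] using (g.le_opNorm x).trans
    (mul_le_one₀ hg (norm_nonneg x) (mem_closedBall_zero_iff.1 hx))

lemma limsup_abs_apply_le_one {g : ℕ → StrongDual ℝ X} (hg : ∀ n, ‖g n‖ ≤ 1) {x : ℕ → X}
    (hx : ∀ n, x n ∈ closedBall 0 1) : limsup (fun n => |g n (x n)|) atTop ≤ 1 :=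
  limsup_le_of_le (isCoboundedUnder_le_of_le atTop fun _ => abs_nonneg _)
    (Eventually.of_forall fun n => abs_apply_le_one_s8 (hg n) (hx n))

lemma betaQ_le_one {g : ℕ → StrongDual ℝ X} (hg : ∀ n, ‖g n‖ ≤ 1) : betaQ g ≤ 1 :=
  Real.sSup_le (by rintro _ ⟨x, hx, -, rfl⟩; exact limsup_abs_apply_le_one hg hx) zero_le_one

lemma one_le_betaQ {g : ℕ → StrongDual ℝ X} (hg : ∀ n, ‖g n‖ ≤ 1) {x : ℕ → X}
    (hx : ∀ n, x n ∈ closedBall 0 1) (hxw : WeaklyNull X x) (hgx : ∀ n, g n (x n) = 1) :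
    1 ≤ betaQ g := by
  refine le_csSup ⟨1, ?_⟩ ⟨x, hx, hxw, ?_⟩
  · rintro _ ⟨y, hy, -, rfl⟩
    exact limsup_abs_apply_le_one hg hy
  · simp [hgx]

lemma sInf_betaQ_isConvexBlock_le_one {f : ℕ → StrongDual ℝ X} (hf : ∀ n, ‖f n‖ ≤ 1) :
    sInf {s | ∃ g, IsConvexBlock f g ∧ s = betaQ g} ≤ 1 := by
  by_cases hT : BddBelow {s | ∃ g, IsConvexBlock f g ∧ s = betaQ g}
  · exact (csInf_le hT ⟨f, .refl f, rfl⟩).trans (betaQ_le_one hf)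
  · rw [Real.sInf_of_not_bddBelow hT]
    exact zero_le_one

lemma K2_le_one : K2 X ≤ 1 :=
  Real.sSup_le (by rintro _ ⟨f, hf, -, rfl⟩; exact sInf_betaQ_isConvexBlock_le_one hf) zero_le_one

lemma one_le_K2 {f : ℕ → StrongDual ℝ X} (hf : ∀ n, ‖f n‖ ≤ 1) (hfw : WeakStarNull X f)
    (h : ∀ g, IsConvexBlock f g → 1 ≤ betaQ g) : 1 ≤ K2 X :=
  le_csSup_of_le ⟨1, by rintro _ ⟨f, hf, -, rfl⟩; exact sInf_betaQ_isConvexBlock_le_one hf⟩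
    ⟨f, hf, hfw, rfl⟩ (le_csInf ⟨betaQ f, f, .refl f, rfl⟩ (by rintro _ ⟨g, hg, rfl⟩; exact h g hg))

lemma weaklyNull_of_norm_sum_smul_le {x : ℕ → X} (C : ℝ)
    (h : ∀ ε : ℕ → ℝ, (∀ i, |ε i| ≤ 1) → ∀ N, ‖∑ i ∈ Finset.range N, ε i • x i‖ ≤ C) :
    WeaklyNull X x := by
  intro φ
  set ε : ℕ → ℝ := fun i => SignType.sign (φ (x i))
  have hε : ∀ i, |ε i| ≤ 1 := fun i => by
    rcases lt_trichotomy (φ (x i)) 0 with hi | hi | hi <;> simp [ε, hi]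
  have hsum : ∀ N, ∑ i ∈ Finset.range N, |φ (x i)| ≤ ‖φ‖ * C := fun N =>
    calc ∑ i ∈ Finset.range N, |φ (x i)| = φ (∑ i ∈ Finset.range N, ε i • x i) := by
          simp [ε, map_sum, map_smul]
      _ ≤ ‖φ (∑ i ∈ Finset.range N, ε i • x i)‖ := Real.le_norm_self _
      _ ≤ ‖φ‖ * ‖∑ i ∈ Finset.range N, ε i • x i‖ := φ.le_opNorm _
      _ ≤ ‖φ‖ * C := by gcongr; exact h ε hε N
  exact (tendsto_zero_iff_abs_tendsto_zero _).2
    (summable_of_sum_range_le (fun i => abs_nonneg _) hsum).tendsto_atTop_zero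

lemma WeaklyNull.tendsto_toWeakSpace {x : ℕ → X} (hx : WeaklyNull X x) :
    Tendsto (fun n => toWeakSpace ℝ X (x n)) atTop (𝓝 0) := by
  refine (WeakBilin.tendsto_iff_forall_eval_tendsto (B := (topDualPairing ℝ X).flip)
    (f := fun n => x n) (x := (0 : X)) fun y z h => ?_).2 fun φ => by simpa using hx φ
  exact SeparatingDual.eq_iff_forall_dual_eq.2 fun φ => LinearMap.congr_fun h φ

lemma WeaklyNull.weaklyCompact_insert_zero_range {x : ℕ → X} (hx : WeaklyNull X x) :
    WeaklyCompact X (insert 0 (range x)) := by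
  rw [WeaklyCompact, image_insert_eq, map_zero, ← range_comp]
  exact hx.tendsto_toWeakSpace.isCompact_insert_range

lemma sSup_abs_apply_image_le_one {g : StrongDual ℝ X} (hg : ‖g‖ ≤ 1) {K : Set X}
    (hK : K ⊆ closedBall 0 1) : sSup ((fun x => |g x|) '' K) ≤ 1 :=
  Real.sSup_le (by rintro _ ⟨x, hx, rfl⟩; exact abs_apply_le_one_s8 hg (hK hx)) zero_le_one

lemma one_le_alphaQ {g : ℕ → StrongDual ℝ X} (hg : ∀ n, ‖g n‖ ≤ 1) {x : ℕ → X}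
    (hx : ∀ n, x n ∈ closedBall 0 1) (hxw : WeaklyNull X x) (hgx : ∀ n, g n (x n) = 1) :
    1 ≤ alphaQ g := by
  have hK : insert 0 (range x) ⊆ closedBall 0 1 :=
    insert_subset (mem_closedBall_self zero_le_one) (range_subset_iff.2 hx)
  have hsup : ∀ n, sSup ((fun y => |g n y|) '' insert 0 (range x)) = 1 := fun n =>
    le_antisymm (sSup_abs_apply_image_le_one (hg n) hK) <|
      le_csSup ⟨1, by rintro _ ⟨y, hy, rfl⟩; exact abs_apply_le_one_s8 (hg n) (hK hy)⟩
        ⟨x n, mem_insert_of_mem _ ⟨n, rfl⟩, by simp [hgx]⟩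
  refine le_csSup ⟨1, ?_⟩ ⟨_, hK, hxw.weaklyCompact_insert_zero_range, by simp [hsup]⟩
  rintro _ ⟨K, hK, -, rfl⟩
  exact limsup_le_of_le (isCoboundedUnder_le_of_le atTop fun n => Real.sSup_nonneg
    (by rintro _ ⟨y, -, rfl⟩; exact abs_nonneg _))
    (Eventually.of_forall fun n => sSup_abs_apply_image_le_one (hg n) hK)

end

namespace ZeroAtInftyContinuousMap

lemma norm_le_of_forall_abs_apply_le {f : C₀(ℕ, ℝ)} {c : ℝ} (hc : 0 ≤ c)
    (h : ∀ m, |f m| ≤ c) : ‖f‖ ≤ c := by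
  rw [← norm_toBCF_eq_norm]
  exact (BoundedContinuousFunction.norm_le hc).2 h

def evalCLM (n : ℕ) : StrongDual ℝ C₀(ℕ, ℝ) :=
  LinearMap.mkContinuous
    { toFun := fun x => x n
      map_add' := fun _ _ => rfl
      map_smul' := fun _ _ => rfl } 1 fun x => by
      simpa [norm_toBCF_eq_norm] using BoundedContinuousFunction.norm_coe_le_norm x.toBCF n

@[simp]
lemma evalCLM_apply (n : ℕ) (x : C₀(ℕ, ℝ)) : evalCLM n x = x n := rfl

lemma norm_evalCLM_le (n : ℕ) : ‖evalCLM n‖ ≤ 1 :=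
  LinearMap.mkContinuous_norm_le _ zero_le_one _

lemma weakStarNull_evalCLM : WeakStarNull C₀(ℕ, ℝ) evalCLM := fun x => by
  simpa [cocompact_eq_cofinite, Nat.cofinite_eq_atTop] using zero_at_infty x

def finsetIndicator (s : Finset ℕ) : C₀(ℕ, ℝ) where
  toFun := (s : Set ℕ).indicator 1
  continuous_toFun := continuous_of_discreteTopology
  zero_at_infty' := by
    rw [cocompact_eq_cofinite]
    exact tendsto_const_nhds.congr' <| s.eventually_cofinite_notMem.mono fun m hm => by simp [hm]

@[simp]
lemma finsetIndicator_apply (s : Finset ℕ) (m : ℕ) :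
    finsetIndicator s m = (s : Set ℕ).indicator 1 m := rfl

lemma norm_finsetIndicator_le (s : Finset ℕ) : ‖finsetIndicator s‖ ≤ 1 :=
  norm_le_of_forall_abs_apply_le zero_le_one fun m => by
    by_cases hm : m ∈ s <;> simp [hm]

lemma norm_sum_smul_finsetIndicator_le {s : ℕ → Finset ℕ} (hs : Pairwise (Disjoint on s))
    {ε : ℕ → ℝ} (hε : ∀ i, |ε i| ≤ 1) (N : ℕ) :
    ‖∑ i ∈ Finset.range N, ε i • finsetIndicator (s i)‖ ≤ 1 := by
  refine norm_le_of_forall_abs_apply_le zero_le_one fun m => ?_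
  set I := (Finset.range N).filter (m ∈ s ·)
  have hm : (∑ i ∈ Finset.range N, ε i • finsetIndicator (s i)) m = ∑ i ∈ I, ε i := by
    rw [← evalCLM_apply, map_sum, Finset.sum_filter]
    simp [Set.indicator_apply]
  have hI : I.card ≤ 1 := Finset.card_le_one.2 fun a ha b hb =>
    hs.eq (Finset.not_disjoint_iff.2 ⟨m, (Finset.mem_filter.1 ha).2, (Finset.mem_filter.1 hb).2⟩)
  calc |(∑ i ∈ Finset.range N, ε i • finsetIndicator (s i)) m|
      ≤ ∑ i ∈ I, |ε i| := hm ▸ Finset.abs_sum_le_sum_abs _ _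
    _ ≤ I.card := by simpa using Finset.sum_le_card_nsmul I _ 1 fun i _ => hε i
    _ ≤ 1 := by exact_mod_cast hI

lemma weaklyNull_finsetIndicator {s : ℕ → Finset ℕ} (hs : Pairwise (Disjoint on s)) :
    WeaklyNull C₀(ℕ, ℝ) fun n => finsetIndicator (s n) :=
  weaklyNull_of_norm_sum_smul_le 1 fun _ hε => norm_sum_smul_finsetIndicator_le hs hε

end ZeroAtInftyContinuousMap

open ZeroAtInftyContinuousMap in
lemma IsConvexBlock.exists_weaklyNull_apply_eq_one {g : ℕ → StrongDual ℝ C₀(ℕ, ℝ)}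
    (hg : IsConvexBlock evalCLM g) : ∃ x : ℕ → C₀(ℕ, ℝ), (∀ n, x n ∈ closedBall 0 1) ∧
      WeaklyNull C₀(ℕ, ℝ) x ∧ ∀ n, g n (x n) = 1 := by
  obtain ⟨k, -, hk, hmem⟩ := hg
  refine ⟨fun n => finsetIndicator (Finset.Ico (k n) (k (n + 1))),
    fun n => mem_closedBall_zero_iff.2 (norm_finsetIndicator_le _),
    weaklyNull_finsetIndicator fun i j hij => ?_,
    fun n => apply_eq_one_of_mem_convexHull ?_ (hmem n)⟩
  · simpa [← Finset.disjoint_coe] using hk.monotone.pairwise_disjoint_on_Ico_succ hij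
  · rintro _ ⟨i, hi, rfl⟩
    simp [hi]

theorem stmt8 : K2 (ZeroAtInftyContinuousMap ℕ ℝ) = 1 ∧
    ¬ PropertyK (ZeroAtInftyContinuousMap ℕ ℝ) := by
  have hf := ZeroAtInftyContinuousMap.norm_evalCLM_le
  have hfw := ZeroAtInftyContinuousMap.weakStarNull_evalCLM
  refine ⟨le_antisymm K2_le_one (one_le_K2 hf hfw fun g hg => ?_), fun hK => ?_⟩
  · obtain ⟨x, hx, hxw, hgx⟩ := hg.exists_weaklyNull_apply_eq_one
    exact one_le_betaQ (hg.norm_le_one hf) hx hxw hgx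
  · obtain ⟨g, hg, hα⟩ := hK _ hfw
    obtain ⟨x, hx, hxw, hgx⟩ := hg.exists_weaklyNull_apply_eq_one
    have := one_le_alphaQ (hg.norm_le_one hf) hx hxw hgx
    linarith
end
end

section
/- A Banach space X has the Grothendieck property if and only if every weak* null sequence in X* admits a convex block subsequence that is norm null. -/
open Filter Topology Metric Set NormedSpace

noncomputable section

variable (X : Type*) [NormedAddCommGroup X] [NormedSpace ℝ X]

variable {X}

variable (X)

/-!
By Hahn–Banach (Mazur), `0` lies in the norm closure of the convex hull of every tail of a weakly
null sequence, which yields a norm null convex block subsequence. Conversely, if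
`Φ (f n) ≥ ε > 0` along a subsequence, every convex block subsequence of it stays in the closed
half-space `{Φ ≥ ε}`, so none is norm null; and subsequences of weak* null sequences are again
weak* null.
-/

section ConvexBlock

variable {E : Type*} [AddCommGroup E] [Module ℝ E]

theorem lt_of_mem_convexHull_image_Ico {x : ℕ → E} {m N : ℕ} {g : E}
    (hg : g ∈ convexHull ℝ (x '' Ico m N)) : m < N := by
  obtain ⟨_, ⟨i, hi, rfl⟩⟩ := convexHull_nonempty_iff.1 ⟨g, hg⟩
  exact hi.1.trans_lt hi.2

theorem convexHull_image_Ici_subset_iUnion (x : ℕ → E) (m : ℕ) :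
    convexHull ℝ (x '' Ici m) ⊆ ⋃ N, convexHull ℝ (x '' Ico m N) := by
  have hmono : Monotone fun N => convexHull ℝ (x '' Ico m N) := fun _ _ h =>
    convexHull_mono (image_mono (Ico_subset_Ico_right h))
  refine convexHull_min ?_ (hmono.directed_le.convex_iUnion fun _ => convex_convexHull ℝ _)
  rw [← iUnion_Ico_right, image_iUnion]
  exact iUnion_mono fun _ => subset_convexHull ℝ _

theorem IsConvexBlock.mem_of_forall_mem {x g : ℕ → E} {S : Set E} (hg : IsConvexBlock x g)
    (hS : Convex ℝ S) (hx : ∀ n, x n ∈ S) (n : ℕ) : g n ∈ S := by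
  obtain ⟨k, -, -, hk⟩ := hg
  exact convexHull_min (image_subset_iff.2 fun i _ => hx i) hS (hk n)

end ConvexBlock

section WeaklyNull

variable {E : Type*} [NormedAddCommGroup E] [NormedSpace ℝ E]

theorem WeaklyNull.zero_mem_closure_convexHull {x : ℕ → E} (hx : WeaklyNull E x) (m : ℕ) :
    (0 : E) ∈ closure (convexHull ℝ (x '' Ici m)) := by
  by_contra h
  obtain ⟨Φ, u, hu0, hu⟩ :=
    geometric_hahn_banach_point_closed (convex_convexHull ℝ _).closure isClosed_closure h
  rw [map_zero] at hu0
  obtain ⟨k, hk, hkm⟩ := ((hx Φ).eventually_lt_const hu0 |>.and (eventually_ge_atTop m)).exists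
  exact (hu _ (subset_closure (subset_convexHull ℝ _ ⟨k, hkm, rfl⟩))).not_gt hk

theorem WeaklyNull.exists_norm_lt_mem_convexHull {x : ℕ → E} (hx : WeaklyNull E x) (m : ℕ)
    {ε : ℝ} (hε : 0 < ε) : ∃ N, ∃ g ∈ convexHull ℝ (x '' Ico m N), ‖g‖ < ε := by
  obtain ⟨g, hg, hgε⟩ := Metric.mem_closure_iff.1 (hx.zero_mem_closure_convexHull m) ε hε
  obtain ⟨N, hN⟩ := mem_iUnion.1 (convexHull_image_Ici_subset_iUnion x m hg)
  exact ⟨N, g, hN, by rwa [dist_zero_left] at hgε⟩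

theorem WeaklyNull.exists_isConvexBlock_tendsto_zero {x : ℕ → E} (hx : WeaklyNull E x) :
    ∃ g, IsConvexBlock x g ∧ Tendsto g atTop (𝓝 0) := by
  choose N g hg hgn using fun m (n : ℕ) =>
    hx.exists_norm_lt_mem_convexHull m (Nat.one_div_pos_of_nat (n := n))
  let k : ℕ → ℕ := fun n => Nat.rec 0 (fun n kn => N kn n) n
  refine ⟨fun n => g (k n) n, ⟨k, rfl, ?_, fun n => hg (k n) n⟩, ?_⟩
  · exact strictMono_nat_of_lt_succ fun n => lt_of_mem_convexHull_image_Ico (hg (k n) n)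
  · refine tendsto_zero_iff_norm_tendsto_zero.2 <| squeeze_zero (fun _ => norm_nonneg _)
      (fun n => (hgn (k n) n).le) tendsto_one_div_add_atTop_nhds_zero_nat

theorem not_frequently_le_apply_of_forall_subseq {x : ℕ → E}
    (H : ∀ φ : ℕ → ℕ, StrictMono φ → ∃ g, IsConvexBlock (x ∘ φ) g ∧ Tendsto g atTop (𝓝 0))
    (Ψ : E →L[ℝ] ℝ) {ε : ℝ} (hε : 0 < ε) : ¬∃ᶠ n in atTop, ε ≤ Ψ (x n) := by
  intro h
  obtain ⟨φ, hφ, hφε⟩ := extraction_of_frequently_atTop h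
  obtain ⟨g, hg, hg0⟩ := H φ hφ
  have hgε : ∀ n, ε ≤ Ψ (g n) := hg.mem_of_forall_mem (convex_halfSpace_ge Ψ.isLinear ε) hφε
  have hΨg : Tendsto (Ψ ∘ g) atTop (𝓝 0) := map_zero Ψ ▸ (Ψ.continuous.tendsto 0).comp hg0
  exact hε.not_ge (ge_of_tendsto' hΨg hgε)

theorem weaklyNull_of_forall_subseq {x : ℕ → E}
    (H : ∀ φ : ℕ → ℕ, StrictMono φ → ∃ g, IsConvexBlock (x ∘ φ) g ∧ Tendsto g atTop (𝓝 0)) :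
    WeaklyNull E x := by
  intro Φ
  by_contra hΦ
  obtain ⟨s, hs, hfreq⟩ := not_tendsto_iff_exists_frequently_notMem.1 hΦ
  obtain ⟨ε, hε, hball⟩ := Metric.mem_nhds_iff.1 hs
  have hle : ∃ᶠ n in atTop, ε ≤ Φ (x n) ∨ ε ≤ (-Φ) (x n) := hfreq.mono fun n hn => by
    rw [neg_apply, ← le_abs]
    simpa [Real.dist_eq] using fun h => hn (hball h)
  rcases frequently_or_distrib.1 hle with h | h
  · exact not_frequently_le_apply_of_forall_subseq H Φ hε h
  · exact not_frequently_le_apply_of_forall_subseq H (-Φ) hε h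

end WeaklyNull

theorem stmt10_general {X : Type*} [NormedAddCommGroup X] [NormedSpace ℝ X] :
    Grothendieck X ↔
      ∀ f : ℕ → X →L[ℝ] ℝ, WeakStarNull X f →
        ∃ g, IsConvexBlock f g ∧ Tendsto (fun n => ‖g n‖) atTop (𝓝 0) := by
  constructor
  · intro hG f hf
    obtain ⟨g, hg, hg0⟩ := WeaklyNull.exists_isConvexBlock_tendsto_zero (hG f hf)
    exact ⟨g, hg, tendsto_zero_iff_norm_tendsto_zero.1 hg0⟩
  · intro H f hf
    refine weaklyNull_of_forall_subseq fun φ hφ => ?_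
    obtain ⟨g, hg, hg0⟩ := H (f ∘ φ) fun v => (hf v).comp hφ.tendsto_atTop
    exact ⟨g, hg, tendsto_zero_iff_norm_tendsto_zero.2 hg0⟩

theorem stmt10 {X : Type*} [NormedAddCommGroup X] [NormedSpace ℝ X] [CompleteSpace X] :
    Grothendieck X ↔
      ∀ f : ℕ → X →L[ℝ] ℝ, WeakStarNull X f →
        ∃ g, IsConvexBlock f g ∧ Tendsto (fun n => ‖g n‖) atTop (𝓝 0) :=
  stmt10_general
end
end

section
/- G(ℓ₁) = 1: there exists a weak* null sequence (f_n) in the unit ball of ℓ∞ = ℓ₁* such that every convex block subsequence (g_n) of (f_n) satisfies ‖g_n‖ = 1 for all n; hence G(ℓ₁) ≥ 1, and G(ℓ₁) ≤ 1 trivially. Specifically one may take f_n = s_ω − s_n where s_ω is the constant-one sequence and s_n is the indicator of {1,…,n}. -/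
open Filter Topology Metric Set NormedSpace

noncomputable section

variable (X : Type*) [NormedAddCommGroup X] [NormedSpace ℝ X]

variable {X}

variable (X)

instance : Fact ((1 : ENNReal) ≤ 1) := ⟨le_rfl⟩

/-! The tail functionals `f_n = s_ω - s_n` have norm at most `1` and tend weak* to `0` on `ℓ¹`,
while every `f_n` with `n ≤ N` takes the value `1` at the unit vector `e_N`. A convex block is a
convex combination of finitely many `f_n`, so it also takes the value `1` at some `e_N` and has
norm exactly `1`. Conversely, `G(X) ≤ 1` for every `X` because each sequence is a convex block of
itself. -/

open scoped lp

section ConvexBlock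

variable {E : Type*} [AddCommGroup E] [Module ℝ E]

theorem IsConvexBlock.refl_s12 (x : ℕ → E) : IsConvexBlock x x :=
  ⟨id, rfl, strictMono_id, fun n =>
    subset_convexHull ℝ _ (mem_image_of_mem x ⟨le_rfl, n.lt_succ_self⟩)⟩

theorem IsConvexBlock.exists_mem_convexHull_Iio {x y : ℕ → E} (h : IsConvexBlock x y) (m : ℕ) :
    ∃ N, y m ∈ convexHull ℝ (x '' Iio N) := by
  obtain ⟨k, -, -, hk⟩ := h
  exact ⟨k (m + 1), convexHull_mono (image_mono Ico_subset_Iio_self) (hk m)⟩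

end ConvexBlock

section GQ

variable {X : Type*} [NormedAddCommGroup X] [NormedSpace ℝ X]

theorem norm_eq_one_of_mem_convexHull {S : Set (X →L[ℝ] ℝ)} (hS : ∀ f ∈ S, ‖f‖ ≤ 1)
    {v : X} (hv : ‖v‖ ≤ 1) (hSv : ∀ f ∈ S, f v = 1) {g : X →L[ℝ] ℝ}
    (hg : g ∈ convexHull ℝ S) : ‖g‖ = 1 := by
  have hg_le : ‖g‖ ≤ 1 := by
    simpa using convexHull_min (fun f hf => by simpa using hS f hf)
      (convex_closedBall (0 : X →L[ℝ] ℝ) 1) hg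
  have hgv : g v = 1 := by
    have hconv : Convex ℝ {f : X →L[ℝ] ℝ | f v = 1} := by
      simpa using convex_hyperplane (ContinuousLinearMap.apply ℝ ℝ v).isLinear 1
    exact convexHull_min hSv hconv hg
  have hg_ge : 1 ≤ ‖g‖ :=
    calc 1 = ‖g v‖ := by simp [hgv]
      _ ≤ ‖g‖ * ‖v‖ := g.le_opNorm v
      _ ≤ ‖g‖ := mul_le_of_le_one_right (norm_nonneg g) hv
  exact le_antisymm hg_le hg_ge

theorem limsup_norm_nonneg {E : Type*} [NormedAddCommGroup E] (g : ℕ → E) :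
    0 ≤ limsup (fun n => ‖g n‖) atTop := by
  rw [limsup_eq]
  refine Real.sInf_nonneg fun a ha => ?_
  obtain ⟨n, hn⟩ := (ha : ∀ᶠ n in atTop, ‖g n‖ ≤ a).exists
  exact (norm_nonneg _).trans hn

theorem sInf_limsup_norm_isConvexBlock_le_one {f : ℕ → X →L[ℝ] ℝ} (hf : ∀ n, ‖f n‖ ≤ 1) :
    sInf {s | ∃ g, IsConvexBlock f g ∧ s = limsup (fun n => ‖g n‖) atTop} ≤ 1 := by
  have hbdd : BddBelow {s | ∃ g, IsConvexBlock f g ∧ s = limsup (fun n => ‖g n‖) atTop} :=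
    ⟨0, by rintro _ ⟨g, -, rfl⟩; exact limsup_norm_nonneg g⟩
  calc _ ≤ limsup (fun n => ‖f n‖) atTop := csInf_le hbdd ⟨f, .refl f, rfl⟩
    _ ≤ 1 := limsup_le_of_le (isCoboundedUnder_le_of_le atTop fun n => norm_nonneg (f n))
        (.of_forall hf)

theorem GQ_le_one : GQ X ≤ 1 :=
  Real.sSup_le (by rintro _ ⟨f, hf, -, rfl⟩; exact sInf_limsup_norm_isConvexBlock_le_one hf)
    zero_le_one

theorem GQ_eq_one_of_norm_isConvexBlock_eq_one {f : ℕ → X →L[ℝ] ℝ} (hf : ∀ n, ‖f n‖ ≤ 1)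
    (hf_null : WeakStarNull X f) (hblock : ∀ g, IsConvexBlock f g → ∀ n, ‖g n‖ = 1) :
    GQ X = 1 := by
  have hset : {s | ∃ g, IsConvexBlock f g ∧ s = limsup (fun n => ‖g n‖) atTop} = {1} := by
    refine eq_singleton_iff_unique_mem.2 ⟨⟨f, .refl f, ?_⟩, ?_⟩
    · simp [hblock f (.refl f)]
    · rintro _ ⟨g, hg, rfl⟩
      simp [hblock g hg]
  refine le_antisymm GQ_le_one (le_csSup ⟨1, ?_⟩ ⟨f, hf, hf_null, by rw [hset, csInf_singleton]⟩)
  rintro _ ⟨f', hf', -, rfl⟩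
  exact sInf_limsup_norm_isConvexBlock_le_one hf'

end GQ

theorem lp.norm_eq_tsum_norm_of_one {α : Type*} {E : α → Type*} [∀ i, NormedAddCommGroup (E i)]
    (x : lp E 1) : ‖x‖ = ∑' i, ‖x i‖ := by
  simpa using lp.norm_eq_tsum_rpow (p := 1) (by simp) x

section TailFunctional

/-- Pairing with `s_ω - s_n ∈ ℓ^∞`; coordinates start at `0`, so `s_n` is the indicator of
`{0, …, n - 1}`. -/
def l1Tail (n : ℕ) : ℓ¹(ℕ, ℝ) →L[ℝ] ℝ :=
  LinearMap.mkContinuous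
    { toFun := fun x => ∑' k, x (k + n)
      map_add' := fun x y => by
        simp only [lp.coeFn_add, Pi.add_apply]
        exact Summable.tsum_add ((summable_nat_add_iff n).2 (lp.memℓp x).summable_of_one)
          ((summable_nat_add_iff n).2 (lp.memℓp y).summable_of_one)
      map_smul' := fun c x => by
        simp only [lp.coeFn_smul, Pi.smul_apply, smul_eq_mul, RingHom.id_apply]
        exact tsum_mul_left }
    1 fun x => by
      have hx : Summable fun k => ‖x k‖ := (lp.memℓp x).norm.summable_of_one
      calc ‖∑' k, x (k + n)‖ ≤ ∑' k, ‖x (k + n)‖ :=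
            norm_tsum_le_tsum_norm ((summable_nat_add_iff n).2 hx)
        _ ≤ ∑' k, ‖x k‖ := tsum_comp_le_tsum_of_inj hx (fun k => norm_nonneg _)
            (add_left_injective n)
        _ = 1 * ‖x‖ := by rw [one_mul, lp.norm_eq_tsum_norm_of_one]

theorem l1Tail_apply (n : ℕ) (x : ℓ¹(ℕ, ℝ)) : l1Tail n x = ∑' k, x (k + n) := rfl

theorem norm_l1Tail_le (n : ℕ) : ‖l1Tail n‖ ≤ 1 :=
  LinearMap.mkContinuous_norm_le _ zero_le_one _

theorem weakStarNull_l1Tail : WeakStarNull ℓ¹(ℕ, ℝ) l1Tail := fun x =>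
  tendsto_sum_nat_add fun k => x k

theorem l1Tail_single {n j : ℕ} (h : n ≤ j) : l1Tail n (lp.single 1 j 1) = 1 := by
  rw [l1Tail_apply, tsum_eq_single (j - n) fun k hk => ?_]
  · simp [lp.single_apply, Nat.sub_add_cancel h]
  · simp [lp.single_apply, Pi.single_apply]
    omega

theorem norm_eq_one_of_isConvexBlock_l1Tail {g : ℕ → ℓ¹(ℕ, ℝ) →L[ℝ] ℝ}
    (hg : IsConvexBlock l1Tail g) (m : ℕ) : ‖g m‖ = 1 := by
  obtain ⟨N, hN⟩ := hg.exists_mem_convexHull_Iio m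
  refine norm_eq_one_of_mem_convexHull ?_ (v := lp.single 1 N 1) (by simp [lp.norm_single]) ?_ hN
  · rintro _ ⟨n, -, rfl⟩
    exact norm_l1Tail_le n
  · rintro _ ⟨n, hn, rfl⟩
    exact l1Tail_single (le_of_lt hn)

end TailFunctional

theorem stmt12 : GQ (lp (fun _ : ℕ => ℝ) 1) = 1 :=
  GQ_eq_one_of_norm_isConvexBlock_eq_one norm_l1Tail_le weakStarNull_l1Tail
    fun _ hg => norm_eq_one_of_isConvexBlock_l1Tail hg
end
end
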